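/- arXiv:2212.12104 — 2 statements merged into one kernel-verified Lean document; each statement's English description precedes it below -/
import Mathlib

section
/- Let F = F₁ ∪ F₂ be a set of FDs over schema R such that all attributes in Att(F₁) ∩ Att(F₂) are certain. Let U be a CIR over R and let the random samples r₁ = π_{Att(F₁)}r and r₂ = π_{Att(F₂)}r be the projections of a random sample r of U. Then the events {r₁ ⊨ F₁} and {r₂ ⊨ F₂} are probabilistically independent, and Pr_U(F) = Pr_{U₁}(F₁) · Pr_{U₂}(F₂), where U_j = π_{Att(F_j)}U. -/
/-! On the support of the sample distribution every certain cell takes its forced value, so there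
satisfaction of `F₂` depends only on the columns outside `Att(F₁)`, while satisfaction of `F₁`
depends only on the columns in `Att(F₁)`. Under a product distribution two such events are
independent: exchanging the `Att(F₁)`-columns of two independent samples is a weight-preserving
involution of pairs of samples, and it turns `[r ⊨ F₁] [r' ⊨ F₂]` into `[r ⊨ F₁ ∪ F₂]`. -/

open Finset

section ProductWeight

variable {κ V : Type*} [Fintype κ] [DecidableEq κ] [Fintype V]

theorem sum_prod_apply_eq_one {w : κ → V → ℝ} (hw : ∀ k, ∑ v, w k v = 1) :
    ∑ s : κ → V, ∏ k, w k (s k) = 1 := by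
  rw [← Fintype.prod_sum]
  exact prod_eq_one fun k _ => hw k

omit [Fintype V] in
theorem prod_piecewise_mul_prod_piecewise (w : κ → V → ℝ) (S : Finset κ) (s t : κ → V) :
    (∏ k, w k (S.piecewise s t k)) * ∏ k, w k (S.piecewise t s k)
      = (∏ k, w k (s k)) * ∏ k, w k (t k) := by
  rw [← prod_mul_distrib, ← prod_mul_distrib]
  refine prod_congr rfl fun k _ => ?_
  by_cases hk : k ∈ S <;> simp [hk, mul_comm]

omit [DecidableEq κ] [Fintype V] in
theorem apply_eq_of_prod_ne_zero {w : κ → V → ℝ} {k : κ} {v : V}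
    (hk : ∀ x ≠ v, w k x = 0) {s : κ → V} (hs : ∏ k, w k (s k) ≠ 0) : s k = v := by
  by_contra hne
  exact prod_ne_zero_iff.mp hs k (mem_univ k) (hk _ hne)

theorem sum_filter_and_eq_mul {w : κ → V → ℝ} (hw : ∀ k, ∑ v, w k v = 1) (S : Finset κ)
    (P Q : (κ → V) → Prop) [DecidablePred P] [DecidablePred Q]
    (hP : ∀ s t : κ → V, (∀ k ∈ S, s k = t k) →
      ∏ k, w k (s k) ≠ 0 → ∏ k, w k (t k) ≠ 0 → (P s ↔ P t))
    (hQ : ∀ s t : κ → V, (∀ k ∉ S, s k = t k) →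
      ∏ k, w k (s k) ≠ 0 → ∏ k, w k (t k) ≠ 0 → (Q s ↔ Q t)) :
    ∑ s with P s ∧ Q s, ∏ k, w k (s k)
      = (∑ s with P s, ∏ k, w k (s k)) * ∑ s with Q s, ∏ k, w k (s k) := by
  set q : (κ → V) → ℝ := fun s => ∏ k, w k (s k)
  let swap : (κ → V) × (κ → V) → (κ → V) × (κ → V) :=
    fun st => (S.piecewise st.1 st.2, S.piecewise st.2 st.1)
  have hswap : Function.Involutive swap := fun st => by simp [swap, piecewise_same]
  have hterm : ∀ s t, (if P s ∧ Q s then q s else 0) * q t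
      = (if P (swap (s, t)).1 then q (swap (s, t)).1 else 0)
        * (if Q (swap (s, t)).2 then q (swap (s, t)).2 else 0) := by
    intro s t
    have hmul : q (swap (s, t)).1 * q (swap (s, t)).2 = q s * q t :=
      prod_piecewise_mul_prod_piecewise w S s t
    rw [ite_zero_mul, ite_zero_mul_ite_zero, hmul]
    by_cases h0 : q s * q t = 0
    · simp [h0]
    have hs : q s ≠ 0 := left_ne_zero_of_mul h0
    obtain ⟨hs', ht'⟩ := mul_ne_zero_iff.mp (hmul ▸ h0)
    refine if_congr (and_congr (hP _ _ (fun k hk => ?_) hs hs') (hQ _ _ (fun k hk => ?_) hs ht'))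
      rfl rfl
    all_goals simp [swap, hk]
  calc ∑ s with P s ∧ Q s, q s
      = ∑ s, ∑ t, (if P s ∧ Q s then q s else 0) * q t := by
        have hq1 : ∑ t, q t = 1 := sum_prod_apply_eq_one hw
        simp only [← mul_sum, hq1, mul_one, sum_filter]
    _ = ∑ st : (κ → V) × (κ → V), (if P (swap st).1 then q (swap st).1 else 0)
          * (if Q (swap st).2 then q (swap st).2 else 0) := by
        rw [← Fintype.sum_prod_type']
        exact sum_congr rfl fun st _ => hterm st.1 st.2
    _ = ∑ st : (κ → V) × (κ → V), (if P st.1 then q st.1 else 0)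
          * (if Q st.2 then q st.2 else 0) :=
        Equiv.sum_comp hswap.toPerm
          (fun st => (if P st.1 then q st.1 else 0) * (if Q st.2 then q st.2 else 0))
    _ = (∑ s with P s, q s) * ∑ s with Q s, q s := by
        rw [sum_filter, sum_filter, sum_mul_sum, Fintype.sum_prod_type]

end ProductWeight

section FunctionalDependencies

variable {ι Att V : Type*}

def SatisfiesFDs (F : Finset (Finset Att × Finset Att)) (s : ι → Att → V) : Prop :=
  ∀ fd ∈ F, ∀ i j : ι, (∀ a ∈ fd.1, s i a = s j a) → ∀ a ∈ fd.2, s i a = s j a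

def fdAttrs [DecidableEq Att] (F : Finset (Finset Att × Finset Att)) : Finset Att :=
  F.sup fun fd => fd.1 ∪ fd.2

theorem satisfiesFDs_union [DecidableEq Att] (F₁ F₂ : Finset (Finset Att × Finset Att))
    (s : ι → Att → V) :
    SatisfiesFDs (F₁ ∪ F₂) s ↔ SatisfiesFDs F₁ s ∧ SatisfiesFDs F₂ s := by
  simp only [SatisfiesFDs, mem_union, or_imp, forall_and]

theorem satisfiesFDs_congr [DecidableEq Att] {F : Finset (Finset Att × Finset Att)}
    {s t : ι → Att → V} (h : ∀ i, ∀ a ∈ fdAttrs F, s i a = t i a) :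
    SatisfiesFDs F s ↔ SatisfiesFDs F t := by
  suffices key : ∀ s t : ι → Att → V, (∀ i, ∀ a ∈ fdAttrs F, s i a = t i a) →
      SatisfiesFDs F s → SatisfiesFDs F t from
    ⟨key s t h, key t s fun i a ha => (h i a ha).symm⟩
  intro s t h hs fd hfd i j hij a ha
  have e : ∀ i, ∀ b ∈ fd.1 ∪ fd.2, s i b = t i b :=
    fun i b hb => h i b (mem_sup.mpr ⟨fd, hfd, hb⟩)
  rw [← e i a (mem_union_right _ ha), ← e j a (mem_union_right _ ha)]
  refine hs fd hfd i j (fun b hb => ?_) a ha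
  rw [e i b (mem_union_left _ hb), e j b (mem_union_left _ hb)]
  exact hij b hb

theorem sum_filter_prod_prod_eq_sum_filter_curry [Fintype ι] [Fintype Att] [Fintype V]
    [DecidableEq ι] [DecidableEq Att] (p : ι → Att → V → ℝ) (P : (ι → Att → V) → Prop)
    [DecidablePred P] :
    ∑ s with P s, ∏ i, ∏ a, p i a (s i a)
      = ∑ s : ι × Att → V with P (Function.curry s), ∏ k, p k.1 k.2 (s k) := by
  rw [sum_filter, sum_filter]
  exact Fintype.sum_equiv (Equiv.curry ι Att V).symm _ _ fun s => by
    simp [Fintype.prod_prod_type]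

end FunctionalDependencies

open Classical in
theorem stmt5_general {Att V ι : Type} [Fintype Att] [Fintype V] [Fintype ι]
    (F1 F2 : Finset (Finset Att × Finset Att))
    (p : ι → Att → V → ℝ)
    (hsum : ∀ (i : ι) (a : Att), ∑ v : V, p i a v = 1)
    (hdet : ∀ a ∈ (F1.sup fun fd => fd.1 ∪ fd.2) ∩ (F2.sup fun fd => fd.1 ∪ fd.2),
      ∀ i : ι, ∃ v : V, ∀ w : V, p i a w = if w = v then 1 else 0) :
    (∑ s ∈ Finset.univ.filter (fun s : ι → Att → V =>
        ∀ fd ∈ F1 ∪ F2, ∀ i j : ι,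
          (∀ a ∈ fd.1, s i a = s j a) → ∀ a ∈ fd.2, s i a = s j a),
        ∏ i : ι, ∏ a : Att, p i a (s i a))
      = (∑ s ∈ Finset.univ.filter (fun s : ι → Att → V =>
            ∀ fd ∈ F1, ∀ i j : ι,
              (∀ a ∈ fd.1, s i a = s j a) → ∀ a ∈ fd.2, s i a = s j a),
            ∏ i : ι, ∏ a : Att, p i a (s i a))
        * (∑ s ∈ Finset.univ.filter (fun s : ι → Att → V =>
            ∀ fd ∈ F2, ∀ i j : ι,
              (∀ a ∈ fd.1, s i a = s j a) → ∀ a ∈ fd.2, s i a = s j a),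
            ∏ i : ι, ∏ a : Att, p i a (s i a)) := by
  rw [sum_filter_prod_prod_eq_sum_filter_curry, sum_filter_prod_prod_eq_sum_filter_curry,
    sum_filter_prod_prod_eq_sum_filter_curry]
  convert sum_filter_and_eq_mul (fun k => hsum k.1 k.2) ({k | k.2 ∈ fdAttrs F1} : Finset _)
    (fun s => SatisfiesFDs F1 (Function.curry s)) (fun s => SatisfiesFDs F2 (Function.curry s))
    ?_ ?_ using 4
  · exact satisfiesFDs_union F1 F2 _
  · rfl
  · rfl
  · intro s t hst _ _
    exact satisfiesFDs_congr fun i a ha => hst (i, a) (by simpa using ha)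
  · intro s t hst hs ht
    refine satisfiesFDs_congr fun i a ha => ?_
    by_cases ha1 : a ∈ fdAttrs F1
    · obtain ⟨v, hv⟩ := hdet a (mem_inter.mpr ⟨ha1, ha⟩) i
      have hv0 : ∀ x ≠ v, p i a x = 0 := fun x hx => by simp [hv, hx]
      exact (apply_eq_of_prod_ne_zero (k := (i, a)) hv0 hs).trans
        (apply_eq_of_prod_ne_zero (k := (i, a)) hv0 ht).symm
    · exact hst (i, a) (by simpa using ha1)

open Classical in
/-- Let `F = F₁ ∪ F₂` over schema `R` with all attributes in
`Att(F₁) ∩ Att(F₂)` certain (deterministic point-mass cells).  Then the events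
`{r₁ ⊨ F₁}` and `{r₂ ⊨ F₂}` over a random sample `r` of `U` are independent and
`Pr_U(F) = Pr_{U₁}(F₁) · Pr_{U₂}(F₂)`: the probability that a random sample satisfies
`F₁ ∪ F₂` equals the product of the probabilities of satisfying `F₁` and of satisfying `F₂`
(each depending only on the corresponding projection of the sample). -/
theorem stmt5 {Att V ι : Type} [Fintype Att] [Fintype V] [Fintype ι]
    (F1 F2 : Finset (Finset Att × Finset Att))
    (p : ι → Att → V → ℝ)
    (hnn : ∀ (i : ι) (a : Att) (v : V), 0 ≤ p i a v)
    (hsum : ∀ (i : ι) (a : Att), ∑ v : V, p i a v = 1)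
    (hdet : ∀ a ∈ (F1.sup fun fd => fd.1 ∪ fd.2) ∩ (F2.sup fun fd => fd.1 ∪ fd.2),
      ∀ i : ι, ∃ v : V, ∀ w : V, p i a w = if w = v then 1 else 0) :
    (∑ s ∈ Finset.univ.filter (fun s : ι → Att → V =>
        ∀ fd ∈ F1 ∪ F2, ∀ i j : ι,
          (∀ a ∈ fd.1, s i a = s j a) → ∀ a ∈ fd.2, s i a = s j a),
        ∏ i : ι, ∏ a : Att, p i a (s i a))
      = (∑ s ∈ Finset.univ.filter (fun s : ι → Att → V =>
            ∀ fd ∈ F1, ∀ i j : ι,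
              (∀ a ∈ fd.1, s i a = s j a) → ∀ a ∈ fd.2, s i a = s j a),
            ∏ i : ι, ∏ a : Att, p i a (s i a))
        * (∑ s ∈ Finset.univ.filter (fun s : ι → Att → V =>
            ∀ fd ∈ F2, ∀ i j : ι,
              (∀ a ∈ fd.1, s i a = s j a) → ∀ a ∈ fd.2, s i a = s j a),
            ∏ i : ι, ∏ a : Att, p i a (s i a)) :=
  stmt5_general F1 F2 p hsum hdet
end

section
/- Let U₀ be a CIR over schema {?A₁, ?A₂} (both attributes uncertain), and for k > 2 construct U over {?A₁,…,?A_k} by extending each tuple of U₀ with k−2 new cells, each holding the same uniform distribution over m distinct fresh values, where m = |tids(U₀)|. Let F_k be the FD set stating that all k attributes are pairwise equivalent (A_i ↔ A_j for all i, j). Then U has a positive-probability sample satisfying F_k if and only if U₀ has a positive-probability sample satisfying {A₁ → A₂, A₂ → A₁}; moreover, for every sample r of U, Pr_U(r) = Pr_{U₀}(π_{{?A₁,?A₂}} r) · m^{−m(k−2)}. -/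
/-!
A sample of `U` of positive probability satisfies `F_k` exactly when all its columns induce the
same partition of the tuple identifiers. Its columns `A₁, A₂` form a consistent sample of `U₀`;
conversely the fresh columns can realize the partition of any consistent sample of `U₀` by
labelling each class with the fresh value of one of its members. Every fresh cell
contributes the factor `1/m`, which gives the scaling `m^(-m(k-2))`.
-/

open Finset

lemma Finset.prod_pos_iff_of_nonneg {ι R : Type*} [CommRing R] [LinearOrder R]
    [IsStrictOrderedRing R] {s : Finset ι} {f : ι → R} (hf : ∀ i ∈ s, 0 ≤ f i) :
    0 < ∏ i ∈ s, f i ↔ ∀ i ∈ s, 0 < f i := by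
  refine ⟨fun h i hi => (hf i hi).lt_of_ne' ?_, Finset.prod_pos⟩
  exact Finset.prod_ne_zero_iff.mp h.ne' i hi

lemma Fin.prod_univ_eq_mul_mul_prod_add_two {M : Type*} [CommMonoid M] {k : ℕ} (hk : 2 ≤ k)
    (f : Fin k → M) :
    ∏ j, f j = f ⟨0, by omega⟩ * f ⟨1, by omega⟩ * ∏ j : Fin (k - 2), f ⟨j + 2, by omega⟩ := by
  obtain ⟨n, rfl⟩ : ∃ n, k = n + 2 := ⟨k - 2, by omega⟩
  rw [Fin.prod_univ_succ, Fin.prod_univ_succ, mul_assoc]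
  rfl

lemma Function.exists_endo_eq_iff_eq {ι α : Type*} (a : ι → α) :
    ∃ g : ι → ι, ∀ s t, g s = g t ↔ a s = a t := by
  let g : ι → ι := fun t => (⟨t, rfl⟩ : ∃ s, a s = a t).choose
  have hg : ∀ t, a (g t) = a t := fun t => (⟨t, rfl⟩ : ∃ s, a s = a t).choose_spec
  refine ⟨g, fun s t => ⟨fun h => by rw [← hg s, h, hg t], fun h => ?_⟩⟩
  simp only [g, h]

section Samples

variable {κ ι W : Type*}

def samplePr [Fintype κ] [Fintype ι] (cell : κ → ι → W → ℝ) (r : κ → ι → W) : ℝ :=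
  ∏ j, ∏ t, cell j t (r j t)

/-- The sample `r` satisfies `F_k`. -/
def PairwiseEquivalent (r : κ → ι → W) : Prop :=
  ∀ j j' s t, r j s = r j t → r j' s = r j' t

lemma samplePr_pos_iff [Fintype κ] [Fintype ι] {cell : κ → ι → W → ℝ}
    (hcell : ∀ j t w, 0 ≤ cell j t w) (r : κ → ι → W) :
    0 < samplePr cell r ↔ ∀ j t, 0 < cell j t (r j t) := by
  simp only [samplePr]
  rw [prod_pos_iff_of_nonneg fun j _ => prod_nonneg fun t _ => hcell j t _]
  simp_rw [prod_pos_iff_of_nonneg fun t _ => hcell _ t _, mem_univ, true_implies]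

lemma pairwiseEquivalent_of_eq_iff {α : Type*} {r : κ → ι → W} (a : ι → α)
    (h : ∀ j s t, r j s = r j t ↔ a s = a t) : PairwiseEquivalent r :=
  fun j j' s t hj => (h j' s t).mpr ((h j s t).mp hj)

end Samples

section Extension

variable {ι V : Type*} [Fintype ι]

noncomputable def freshUniform (ι V : Type*) [Fintype ι] : V ⊕ ι → ℝ
  | Sum.inl _ => 0
  | Sum.inr _ => 1 / (Fintype.card ι : ℝ)

noncomputable def extendedCell (k : ℕ) (p1 p2 : ι → V ⊕ ι → ℝ) : Fin k → ι → V ⊕ ι → ℝ :=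
  fun j => if j.val = 0 then p1 else if j.val = 1 then p2 else fun _ => freshUniform ι V

variable {k : ℕ} {p1 p2 : ι → V ⊕ ι → ℝ}

lemma extendedCell_of_val_eq_zero (j : Fin k) (hj : j.val = 0) : extendedCell k p1 p2 j = p1 :=
  if_pos hj

lemma extendedCell_of_val_eq_one (j : Fin k) (hj : j.val = 1) : extendedCell k p1 p2 j = p2 := by
  simp [extendedCell, hj]

lemma extendedCell_of_two_le {j : Fin k} (hj : 2 ≤ j.val) (t : ι) (w : V ⊕ ι) :
    extendedCell k p1 p2 j t w = freshUniform ι V w := by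
  simp [extendedCell, show j.val ≠ 0 by omega, show j.val ≠ 1 by omega]

lemma freshUniform_nonneg (w : V ⊕ ι) : 0 ≤ freshUniform ι V w := by
  cases w <;> simp [freshUniform]

lemma freshUniform_inr (i : ι) : freshUniform ι V (Sum.inr i) = (Fintype.card ι : ℝ)⁻¹ := by
  simp [freshUniform]

lemma extendedCell_nonneg (hnn1 : ∀ t w, 0 ≤ p1 t w) (hnn2 : ∀ t w, 0 ≤ p2 t w)
    (j : Fin k) (t : ι) (w : V ⊕ ι) : 0 ≤ extendedCell k p1 p2 j t w := by
  by_cases h0 : j.val = 0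
  · simpa [extendedCell_of_val_eq_zero j h0] using hnn1 t w
  by_cases h1 : j.val = 1
  · simpa [extendedCell_of_val_eq_one j h1] using hnn2 t w
  rw [extendedCell_of_two_le (by omega)]
  exact freshUniform_nonneg w

end Extension

section Transfer

variable {ι V : Type*} [Fintype ι] {k : ℕ} {p1 p2 : ι → V ⊕ ι → ℝ}

lemma prod_pos_of_samplePr_extendedCell_pos (hk : 2 ≤ k) (hnn1 : ∀ t w, 0 ≤ p1 t w)
    (hnn2 : ∀ t w, 0 ≤ p2 t w) {r : Fin k → ι → V ⊕ ι}
    (hpos : 0 < samplePr (extendedCell k p1 p2) r) :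
    0 < ∏ t, p1 t (r ⟨0, by omega⟩ t) * p2 t (r ⟨1, by omega⟩ t) := by
  rw [samplePr_pos_iff (extendedCell_nonneg hnn1 hnn2)] at hpos
  refine prod_pos fun t _ => mul_pos ?_ ?_
  · simpa only [extendedCell_of_val_eq_zero (k := k) ⟨0, by omega⟩ rfl]
      using hpos ⟨0, by omega⟩ t
  · simpa only [extendedCell_of_val_eq_one (k := k) ⟨1, by omega⟩ rfl]
      using hpos ⟨1, by omega⟩ t

lemma exists_samplePr_extendedCell_pos (hnn1 : ∀ t w, 0 ≤ p1 t w) (hnn2 : ∀ t w, 0 ≤ p2 t w)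
    {a b : ι → V ⊕ ι} (hpos : 0 < ∏ t, p1 t (a t) * p2 t (b t))
    (hab : ∀ s t, a s = a t ↔ b s = b t) :
    ∃ r : Fin k → ι → V ⊕ ι, 0 < samplePr (extendedCell k p1 p2) r ∧ PairwiseEquivalent r := by
  obtain ⟨g, hg⟩ := Function.exists_endo_eq_iff_eq a
  have hfac : ∀ t, 0 < p1 t (a t) ∧ 0 < p2 t (b t) := fun t => by
    have h := (prod_pos_iff_of_nonneg fun t _ => mul_nonneg (hnn1 t _) (hnn2 t _)).mp hpos t
      (mem_univ t)
    exact ⟨(hnn1 t _).lt_of_ne' (left_ne_zero_of_mul h.ne'),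
      (hnn2 t _).lt_of_ne' (right_ne_zero_of_mul h.ne')⟩
  let r : Fin k → ι → V ⊕ ι := fun j =>
    if j.val = 0 then a else if j.val = 1 then b else Sum.inr ∘ g
  refine ⟨r, (samplePr_pos_iff (extendedCell_nonneg hnn1 hnn2) r).mpr fun j t => ?_,
    pairwiseEquivalent_of_eq_iff a fun j s t => ?_⟩
  · by_cases h0 : j.val = 0
    · simpa [r, h0, extendedCell_of_val_eq_zero j h0] using (hfac t).1
    by_cases h1 : j.val = 1
    · simpa [r, h0, h1, extendedCell_of_val_eq_one j h1] using (hfac t).2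
    have : Nonempty ι := ⟨t⟩
    simp only [r, h0, h1, if_false, Function.comp_apply,
      extendedCell_of_two_le (show 2 ≤ j.val by omega), freshUniform_inr]
    positivity
  · by_cases h0 : j.val = 0
    · simp [r, h0]
    by_cases h1 : j.val = 1
    · simpa [r, h1] using (hab s t).symm
    simpa [r, h0, h1] using hg s t

lemma samplePr_extendedCell (hk : 2 ≤ k) (r : Fin k → ι → V ⊕ ι)
    (hr : ∀ j : Fin k, 2 ≤ j.val → ∀ t, ∃ i, r j t = Sum.inr i) :
    samplePr (extendedCell k p1 p2) r =
      (∏ t, p1 t (r ⟨0, by omega⟩ t) * p2 t (r ⟨1, by omega⟩ t))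
        * ((Fintype.card ι : ℝ))⁻¹ ^ (Fintype.card ι * (k - 2)) := by
  have hfresh : ∀ j : Fin (k - 2),
      ∏ t, extendedCell k p1 p2 ⟨j + 2, by omega⟩ t (r ⟨j + 2, by omega⟩ t) =
        ((Fintype.card ι : ℝ))⁻¹ ^ Fintype.card ι := by
    intro j
    calc _ = ∏ _t : ι, ((Fintype.card ι : ℝ))⁻¹ := prod_congr rfl fun t _ => by
            obtain ⟨i, hi⟩ := hr ⟨j + 2, by omega⟩ (Nat.le_add_left 2 j) t
            rw [extendedCell_of_two_le (Nat.le_add_left 2 j), hi, freshUniform_inr]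
      _ = _ := by rw [prod_const, card_univ]
  rw [samplePr, Fin.prod_univ_eq_mul_mul_prod_add_two hk,
    extendedCell_of_val_eq_zero (k := k) ⟨0, by omega⟩ rfl,
    extendedCell_of_val_eq_one (k := k) ⟨1, by omega⟩ rfl, prod_congr rfl fun j _ => hfresh j,
    prod_const, card_univ, Fintype.card_fin, ← pow_mul, prod_mul_distrib]

end Transfer

/-- Let `U₀` be a CIR over `{?A₁, ?A₂}` (cell distributions `p1 t`, `p2 t`,
supported on the original values, i.e. vanishing on the fresh values `Sum.inr i`).  For `k > 2`,
extend each tuple with `k − 2` new cells, each holding the uniform distribution over the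
`m = |tids(U₀)|` fresh values.  Let `F_k` state that all `k` attributes are pairwise equivalent.
Then `U` has a positive-probability sample satisfying `F_k` iff `U₀` has a positive-probability
sample satisfying `{A₁ → A₂, A₂ → A₁}`; moreover for every sample `r` of `U` whose fresh columns
take fresh values, `Pr_U(r) = Pr_{U₀}(π_{{?A₁,?A₂}} r) · m^{−m(k−2)}`. -/
theorem stmt9 {ι V : Type} [Fintype ι] (k : ℕ) (hk : 2 < k)
    (p1 p2 : ι → (V ⊕ ι) → ℝ)
    (hnn1 : ∀ t w, 0 ≤ p1 t w) (hnn2 : ∀ t w, 0 ≤ p2 t w) :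
    let m : ℕ := Fintype.card ι
    let u : (V ⊕ ι) → ℝ := fun w => match w with
      | Sum.inl _ => 0
      | Sum.inr _ => 1 / (m : ℝ)
    let cell : Fin k → ι → (V ⊕ ι) → ℝ := fun j =>
      if j.val = 0 then p1 else if j.val = 1 then p2 else fun _ => u
    let Pr : (Fin k → ι → (V ⊕ ι)) → ℝ := fun r => ∏ j : Fin k, ∏ t : ι, cell j t (r j t)
    -- possible consistency transfers in both directions
    ((∃ r : Fin k → ι → (V ⊕ ι), 0 < Pr r ∧
        ∀ j j' : Fin k, ∀ s t : ι, r j s = r j t → r j' s = r j' t)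
      ↔ (∃ a b : ι → (V ⊕ ι),
          0 < (∏ t : ι, p1 t (a t) * p2 t (b t)) ∧
          ∀ s t : ι, (a s = a t ↔ b s = b t)))
    -- the probability-scaling formula
    ∧ ∀ r : Fin k → ι → (V ⊕ ι),
        (∀ j : Fin k, 2 ≤ j.val → ∀ t : ι, ∃ i : ι, r j t = Sum.inr i) →
        Pr r = (∏ t : ι, p1 t (r ⟨0, by omega⟩ t) * p2 t (r ⟨1, by omega⟩ t))
          * ((m : ℝ))⁻¹ ^ (m * (k - 2)) := by
  intro m u cell Pr
  have hu : u = freshUniform ι V := funext fun w => by cases w <;> rfl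
  have hPr : Pr = samplePr (extendedCell k p1 p2) := by
    simp only [Pr, cell, hu]
    rfl
  rw [hPr]
  refine ⟨⟨fun ⟨r, hpos, hr⟩ => ⟨r ⟨0, by omega⟩, r ⟨1, by omega⟩,
      prod_pos_of_samplePr_extendedCell_pos hk.le hnn1 hnn2 hpos,
      fun s t => ⟨hr _ _ s t, hr _ _ s t⟩⟩,
    fun ⟨_, _, hpos, hab⟩ => exists_samplePr_extendedCell_pos hnn1 hnn2 hpos hab⟩,
    samplePr_extendedCell hk.le⟩
end
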